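/- arXiv:2104.11215 — 3 statements merged into one kernel-verified Lean document; each statement's English description precedes it below -/
import Mathlib

section
/- Let A be a finite set with pr₁, pr₂ : A → ℕ satisfying pr₂(x) < pr₁(x) for all x ∈ A. Define P₀ = max(1, max_{x∈A}(pr₁(x) − 2·pr₂(x))), pr'_i(x) = pr_i(x) + P₀, and P'_i = P_i + B·P₀. Then for all x ∈ A: pr'₁(x) − pr'₂(x) ≤ pr'₂(x) < pr'₁(x); and for every T ⊆ A with |T| = B and i ∈ {1,2}: pr_i(T) ≥ P_i iff pr'_i(T) ≥ P'_i. -/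
/-- Shift step for the restricted bi-objective knapsack problem: with
`P₀ = max(1, max_{x∈A}(pr₁(x) − 2·pr₂(x)))` and `pr'ᵢ = prᵢ + P₀`,
`P'ᵢ = Pᵢ + B·P₀`, the new profits satisfy
`pr'₁ − pr'₂ ≤ pr'₂ < pr'₁`, and for every `T ⊆ A` with `|T| = B` the
threshold conditions are preserved. -/
theorem stmt6 {ι : Type*} [DecidableEq ι] (A : Finset ι) (pr1 pr2 : ι → ℕ)
    (h : ∀ x ∈ A, pr2 x < pr1 x) (B P1 P2 : ℕ) :
    (∀ x ∈ A,
      (pr1 x + max 1 (A.sup fun y => pr1 y - 2 * pr2 y)) -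
          (pr2 x + max 1 (A.sup fun y => pr1 y - 2 * pr2 y)) ≤
        pr2 x + max 1 (A.sup fun y => pr1 y - 2 * pr2 y) ∧
      pr2 x + max 1 (A.sup fun y => pr1 y - 2 * pr2 y) <
        pr1 x + max 1 (A.sup fun y => pr1 y - 2 * pr2 y)) ∧
    ∀ T ⊆ A, T.card = B →
      ((P1 ≤ ∑ x ∈ T, pr1 x ↔
          P1 + B * max 1 (A.sup fun y => pr1 y - 2 * pr2 y) ≤
            ∑ x ∈ T, (pr1 x + max 1 (A.sup fun y => pr1 y - 2 * pr2 y))) ∧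
       (P2 ≤ ∑ x ∈ T, pr2 x ↔
          P2 + B * max 1 (A.sup fun y => pr1 y - 2 * pr2 y) ≤
            ∑ x ∈ T, (pr2 x + max 1 (A.sup fun y => pr1 y - 2 * pr2 y)))) := by
  set P0 := max 1 (A.sup fun y => pr1 y - 2 * pr2 y) with hP0
  constructor
  · intro x hx
    constructor
    · have h1 : pr1 x - 2 * pr2 x ≤ P0 := by
        rw [hP0]
        exact le_trans (Finset.le_sup (f := fun y => pr1 y - 2 * pr2 y) hx)
          (le_max_right _ _)
      omega
    · have := h x hx; omega
  · intro T hT hcard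
    have key : ∀ f : ι → ℕ, ∑ x ∈ T, (f x + P0) = (∑ x ∈ T, f x) + B * P0 := by
      intro f
      rw [Finset.sum_add_distrib, Finset.sum_const, ← hcard, smul_eq_mul]
    constructor <;> rw [key] <;> omega
end

section
/- Let G be a graph that is a disjoint union of edges (a perfect induced matching, i.e., a 1-regular graph) with edge weights w : E(G) → ℕ, and let k₁ ∈ ℕ. Then there exists a set V₀ of at most k₁ vertices maximizing the total weight of covered edges that consists of one endpoint from each of the k₁ heaviest edges; moreover the covered edges form a matching of the same weight. -/
/-- `M` is a matching of `G`. -/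
def IsMatchingSet {V : Type*} (G : SimpleGraph V) (M : Finset (Sym2 V)) : Prop :=
  ↑M ⊆ G.edgeSet ∧ ∀ e ∈ M, ∀ f ∈ M, e ≠ f → ∀ v : V, v ∈ e → v ∉ f

/-- The set of edges of `G` covered by the vertex set `V₀`. -/
def coveredEdges {V : Type*} [Fintype V] [DecidableEq V] (G : SimpleGraph V)
    [DecidableRel G.Adj] (V₀ : Finset V) : Finset (Sym2 V) :=
  G.edgeFinset.filter fun e => ∃ v ∈ V₀, v ∈ e

lemma topk {α : Type*} [DecidableEq α] (w : α → ℕ) (s : Finset α) :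
    ∀ n, n ≤ s.card → ∃ t ⊆ s, t.card = n ∧
      ∀ e ∈ t, ∀ f ∈ s, f ∉ t → w f ≤ w e := by
  intro n
  induction n with
  | zero => exact fun _ => ⟨∅, by simp⟩
  | succ n ih =>
    intro h
    obtain ⟨t, hts, hcard, hmax⟩ := ih (Nat.le_of_succ_le h)
    have hne : (s \ t).Nonempty := by
      rw [Finset.sdiff_nonempty]
      intro hsub
      have := Finset.card_le_card hsub
      omega
    obtain ⟨m, hm, hmm⟩ := Finset.exists_max_image (s \ t) w hne
    have hmt : m ∉ t := (Finset.mem_sdiff.mp hm).2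
    refine ⟨insert m t, ?_, ?_, ?_⟩
    · exact Finset.insert_subset (Finset.mem_sdiff.mp hm).1 hts
    · rw [Finset.card_insert_of_notMem hmt, hcard]
    · intro e he f hf hft
      have hf' : f ∈ s \ t := Finset.mem_sdiff.mpr ⟨hf, fun hft' => hft (Finset.mem_insert_of_mem hft')⟩
      rcases Finset.mem_insert.mp he with rfl | he'
      · exact hmm f hf'
      · exact hmax e he' f hf (Finset.mem_sdiff.mp hf').2

/-- In a 1-regular graph (a disjoint union of edges) with edge weights `w`, there is a
set `V₀` of at most `k₁` vertices maximizing the covered weight, consisting of exactly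
one endpoint of each of the `k₁` heaviest edges `E₀`; the covered edges form a
matching of the same total weight. -/
theorem stmt11 {V : Type*} [Fintype V] [DecidableEq V] (G : SimpleGraph V)
    [DecidableRel G.Adj] (hreg : G.IsRegularOfDegree 1) (w : Sym2 V → ℕ) (k1 : ℕ) :
    ∃ (V₀ : Finset V) (E₀ : Finset (Sym2 V)),
      E₀ ⊆ G.edgeFinset ∧
      E₀.card = min k1 G.edgeFinset.card ∧
      (∀ e ∈ E₀, ∀ f ∈ G.edgeFinset, f ∉ E₀ → w f ≤ w e) ∧
      V₀.card ≤ k1 ∧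
      (∀ e ∈ E₀, ∃! v, v ∈ V₀ ∧ v ∈ e) ∧
      (∀ v ∈ V₀, ∃ e ∈ E₀, v ∈ e) ∧
      (∀ V₁ : Finset V, V₁.card ≤ k1 →
        ∑ e ∈ coveredEdges G V₁, w e ≤ ∑ e ∈ coveredEdges G V₀, w e) ∧
      IsMatchingSet G (coveredEdges G V₀) ∧
      ∑ e ∈ coveredEdges G V₀, w e = ∑ e ∈ E₀, w e := by
  classical
  -- edges through a common vertex are equal
  have huniq : ∀ e ∈ G.edgeFinset, ∀ f ∈ G.edgeFinset, ∀ v : V, v ∈ e → v ∈ f → e = f := by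
    intro e he f hf v hve hvf
    have h1 : (G.incidenceFinset v).card = 1 := by
      rw [SimpleGraph.card_incidenceFinset_eq_degree]; exact hreg v
    have hme : e ∈ G.incidenceFinset v := by
      rw [SimpleGraph.mem_incidenceFinset]
      exact ⟨SimpleGraph.mem_edgeFinset.mp he, hve⟩
    have hmf : f ∈ G.incidenceFinset v := by
      rw [SimpleGraph.mem_incidenceFinset]
      exact ⟨SimpleGraph.mem_edgeFinset.mp hf, hvf⟩
    exact Finset.card_le_one.mp h1.le e hme f hmf
  obtain ⟨E₀, hsub, hcard, hmax⟩ :=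
    topk w G.edgeFinset (min k1 G.edgeFinset.card) (min_le_right _ _)
  set pick : Sym2 V → V := fun e => e.out.1 with hpick
  have hpickmem : ∀ e : Sym2 V, pick e ∈ e := fun e => Sym2.out_fst_mem e
  set V₀ : Finset V := E₀.image pick with hV₀
  have hpickinj : Set.InjOn pick E₀ := by
    intro e he f hf hef
    exact huniq e (hsub he) f (hsub hf) (pick e) (hpickmem e) (hef ▸ hpickmem f)
  have hV₀card : V₀.card = E₀.card := Finset.card_image_of_injOn hpickinj
  -- unique endpoint property
  have hunique : ∀ e ∈ E₀, ∃! v, v ∈ V₀ ∧ v ∈ e := by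
    intro e he
    refine ⟨pick e, ⟨Finset.mem_image_of_mem pick he, hpickmem e⟩, ?_⟩
    rintro v ⟨hv, hve⟩
    obtain ⟨f, hf, rfl⟩ := Finset.mem_image.mp hv
    have : e = f := huniq e (hsub he) f (hsub hf) (pick f) hve (hpickmem f)
    rw [this]
  have hcov : coveredEdges G V₀ = E₀ := by
    ext e
    simp only [coveredEdges, Finset.mem_filter]
    constructor
    · rintro ⟨he, v, hv, hve⟩
      obtain ⟨f, hf, rfl⟩ := Finset.mem_image.mp hv
      have : e = f := huniq e he f (hsub hf) (pick f) hve (hpickmem f)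
      exact this ▸ hf
    · intro he
      exact ⟨hsub he, pick e, Finset.mem_image_of_mem pick he, hpickmem e⟩
  -- any small edge set has weight ≤ E₀
  have hopt : ∀ S ⊆ G.edgeFinset, S.card ≤ k1 → ∑ e ∈ S, w e ≤ ∑ e ∈ E₀, w e := by
    intro S hS hSk
    have hSE : S.card ≤ E₀.card := by
      rw [hcard]; exact le_min hSk (Finset.card_le_card hS)
    have h1 : ∑ e ∈ S, w e = ∑ e ∈ S ∩ E₀, w e + ∑ e ∈ S \ E₀, w e := by
      rw [Finset.sum_inter_add_sum_sdiff]
    have h2 : ∑ e ∈ E₀, w e = ∑ e ∈ E₀ ∩ S, w e + ∑ e ∈ E₀ \ S, w e := by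
      rw [Finset.sum_inter_add_sum_sdiff]
    rw [h1, h2, Finset.inter_comm]
    refine Nat.add_le_add_left ?_ _
    have hcardAB : (S \ E₀).card ≤ (E₀ \ S).card := by
      have := Finset.card_inter_add_card_sdiff S E₀
      have := Finset.card_inter_add_card_sdiff E₀ S
      rw [Finset.inter_comm E₀ S] at this
      omega
    rcases (S \ E₀).eq_empty_or_nonempty with hA | hA
    · simp [hA]
    · have hB : (E₀ \ S).Nonempty := Finset.card_pos.mp (lt_of_lt_of_le (Finset.card_pos.mpr hA) hcardAB)
      set m := (E₀ \ S).inf' hB w with hm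
      have hup : ∀ a ∈ S \ E₀, w a ≤ m := by
        intro a ha
        rw [hm, Finset.le_inf'_iff]
        intro b hb
        exact hmax b (Finset.mem_sdiff.mp hb).1 a (hS (Finset.mem_sdiff.mp ha).1)
          (Finset.mem_sdiff.mp ha).2
      calc ∑ e ∈ S \ E₀, w e ≤ (S \ E₀).card * m := by
              simpa using Finset.sum_le_card_nsmul _ _ m hup
        _ ≤ (E₀ \ S).card * m := Nat.mul_le_mul_right m hcardAB
        _ ≤ ∑ e ∈ E₀ \ S, w e := by
              simpa using Finset.card_nsmul_le_sum (E₀ \ S) w m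
                (fun b hb => Finset.inf'_le w hb)
  refine ⟨V₀, E₀, hsub, hcard, hmax, ?_, hunique, ?_, ?_, ?_, by rw [hcov]⟩
  · rw [hV₀card, hcard]; exact min_le_left _ _
  · intro v hv
    obtain ⟨f, hf, rfl⟩ := Finset.mem_image.mp hv
    exact ⟨f, hf, hpickmem f⟩
  · intro V₁ hV₁
    rw [hcov]
    refine hopt _ (Finset.filter_subset _ _) ?_
    -- card of covered edges ≤ card V₁
    have hsub' : coveredEdges G V₁ ⊆ V₁.biUnion (fun v => G.incidenceFinset v) := by
      intro e he
      obtain ⟨he', v, hv, hve⟩ := Finset.mem_filter.mp he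
      refine Finset.mem_biUnion.mpr ⟨v, hv, ?_⟩
      rw [SimpleGraph.mem_incidenceFinset]
      exact ⟨SimpleGraph.mem_edgeFinset.mp he', hve⟩
    calc (coveredEdges G V₁).card ≤ _ := Finset.card_le_card hsub'
      _ ≤ ∑ v ∈ V₁, (G.incidenceFinset v).card := Finset.card_biUnion_le
      _ = ∑ v ∈ V₁, 1 := by
            refine Finset.sum_congr rfl fun v _ => ?_
            rw [SimpleGraph.card_incidenceFinset_eq_degree]; exact hreg v
      _ = V₁.card := by simp
      _ ≤ k1 := hV₁
  · constructor
    · rw [hcov]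
      intro e he
      exact SimpleGraph.mem_edgeFinset.mp (hsub he)
    · rw [hcov]
      intro e he f hf hef v hve hvf
      exact hef (huniq e (hsub he) f (hsub hf) v hve hvf)
end

section
/- Let G be a bipartite graph, w : E(G) → ℕ, and let V₀ be a vertex set with w(E(V₀)) ≥ k₂ and containing a matching within E(V₀) of weight ≥ k₃. Embed G into a graph G' by adding a set E₁ of new edges with |E₁| < C where C = |V(G)|², scale old weights by w'(e) = C·w(e), set w'(e) = 1 for new edges, and set k'₂ = C·k₂, k'₃ = C·k₃. Then a vertex set V₀ of G' satisfies w'(E'(V₀)) ≥ k'₂ and contains a matching of w'-weight ≥ k'₃ among covered edges if and only if, restricting to old edges, w(E(V₀) ∩ E(G)) ≥ k₂ and the covered old edges contain a matching of w-weight ≥ k₃. -/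
private lemma arith_key (C a r k : ℕ) (hr : r < C) : C * k ≤ C * a + r ↔ k ≤ a := by
  constructor
  · intro h
    by_contra hk
    push_neg at hk
    have h2 : C * (a + 1) ≤ C * k := Nat.mul_le_mul_left _ hk
    rw [Nat.mul_succ] at h2
    omega
  · intro h
    calc C * k ≤ C * a := Nat.mul_le_mul_left _ h
      _ ≤ C * a + r := Nat.le_add_right _ _

/-- Weight-scaling in the regularization reduction: embed `G` into `G'` by adding
fewer than `C = |V|²` new edges, scale old weights by `C` and give new edges weight
`1`. Then for any vertex set `V₀`, the scaled thresholds `C·k₂`, `C·k₃` are met in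
`G'` iff the original thresholds `k₂`, `k₃` are met by the covered old edges. -/
theorem stmt16 {V : Type*} [Fintype V] [DecidableEq V] (G G' : SimpleGraph V)
    [DecidableRel G.Adj] [DecidableRel G'.Adj] (hle : G ≤ G')
    (hE1 : (G'.edgeFinset \ G.edgeFinset).card < Fintype.card V ^ 2)
    (w w' : Sym2 V → ℕ)
    (hw' : ∀ e, w' e = if e ∈ G.edgeFinset then Fintype.card V ^ 2 * w e else 1)
    (k2 k3 : ℕ) (V₀ : Finset V) :
    ((Fintype.card V ^ 2 * k2 ≤ ∑ e ∈ coveredEdges G' V₀, w' e) ∧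
      ∃ M ⊆ coveredEdges G' V₀, IsMatchingSet G' M ∧
        Fintype.card V ^ 2 * k3 ≤ ∑ e ∈ M, w' e) ↔
    ((k2 ≤ ∑ e ∈ coveredEdges G V₀, w e) ∧
      ∃ M ⊆ coveredEdges G V₀, IsMatchingSet G M ∧ k3 ≤ ∑ e ∈ M, w e) := by
  set C := Fintype.card V ^ 2 with hC
  -- sum decomposition for any edge set
  have hsum : ∀ S : Finset (Sym2 V),
      ∑ e ∈ S, w' e = C * ∑ e ∈ S ∩ G.edgeFinset, w e + (S \ G.edgeFinset).card := by
    intro S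
    rw [← Finset.sum_filter_add_sum_filter_not S (· ∈ G.edgeFinset)]
    congr 1
    · rw [Finset.mul_sum]
      rw [show S ∩ G.edgeFinset = S.filter (· ∈ G.edgeFinset) by
        ext e; simp [Finset.mem_filter]]
      apply Finset.sum_congr rfl
      intro e he
      rw [Finset.mem_filter] at he
      rw [hw', if_pos he.2]
    · rw [show S \ G.edgeFinset = S.filter (· ∉ G.edgeFinset) by
        ext e; simp [Finset.mem_filter]]
      rw [Finset.card_eq_sum_ones]
      apply Finset.sum_congr rfl
      intro e he
      rw [Finset.mem_filter] at he
      rw [hw', if_neg he.2]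
  -- covered edges relation
  have hcov : coveredEdges G V₀ = coveredEdges G' V₀ ∩ G.edgeFinset := by
    ext e
    simp only [coveredEdges, Finset.mem_filter, Finset.mem_inter,
      SimpleGraph.mem_edgeFinset]
    have := @SimpleGraph.edgeSet_mono V G G' hle
    constructor
    · rintro ⟨he, hv⟩
      exact ⟨⟨this he, hv⟩, he⟩
    · rintro ⟨⟨_, hv⟩, he⟩
      exact ⟨he, hv⟩
  have hcovsub : ∀ (H : SimpleGraph V) [DecidableRel H.Adj],
      coveredEdges H V₀ ⊆ H.edgeFinset := by
    intro H _
    exact Finset.filter_subset _ _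
  constructor
  · rintro ⟨h2, M, hM, ⟨hMe, hMd⟩, h3⟩
    have hMsub : M ⊆ G'.edgeFinset := hM.trans (hcovsub G')
    constructor
    · have := hsum (coveredEdges G' V₀)
      rw [this] at h2
      rw [hcov]
      have hrem : (coveredEdges G' V₀ \ G.edgeFinset).card < C := by
        refine lt_of_le_of_lt (Finset.card_le_card ?_) hE1
        exact Finset.sdiff_subset_sdiff (hcovsub G') le_rfl
      exact (arith_key C _ _ _ hrem).mp h2
    · refine ⟨M ∩ G.edgeFinset, ?_, ⟨?_, ?_⟩, ?_⟩
      · rw [hcov]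
        exact Finset.inter_subset_inter hM le_rfl
      · intro e he
        simp only [Finset.coe_inter, Set.mem_inter_iff, Finset.mem_coe] at he
        exact SimpleGraph.mem_edgeFinset.mp he.2
      · intro e he f hf hef v hv
        exact hMd e (Finset.mem_of_mem_inter_left he) f
          (Finset.mem_of_mem_inter_left hf) hef v hv
      · have := hsum M
        rw [this] at h3
        have hrem : (M \ G.edgeFinset).card < C := by
          refine lt_of_le_of_lt (Finset.card_le_card ?_) hE1
          exact Finset.sdiff_subset_sdiff hMsub le_rfl
        exact (arith_key C _ _ _ hrem).mp h3
  · rintro ⟨h2, M, hM, ⟨hMe, hMd⟩, h3⟩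
    have hMG : M ⊆ G.edgeFinset := hM.trans (hcovsub G)
    constructor
    · rw [hsum (coveredEdges G' V₀), ← hcov]
      calc C * k2 ≤ C * ∑ e ∈ coveredEdges G V₀, w e := Nat.mul_le_mul_left _ h2
        _ ≤ _ := Nat.le_add_right _ _
    · refine ⟨M, ?_, ⟨?_, hMd⟩, ?_⟩
      · intro e he
        have := hM he
        rw [hcov] at this
        exact Finset.mem_of_mem_inter_left this
      · intro e he
        exact SimpleGraph.edgeSet_mono hle (hMe he)
      · have hMeq : ∑ e ∈ M, w' e = C * ∑ e ∈ M, w e := by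
          rw [Finset.mul_sum]
          apply Finset.sum_congr rfl
          intro e he
          rw [hw', if_pos (hMG he)]
        rw [hMeq]
        exact Nat.mul_le_mul_left _ h3
end
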